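/- arXiv:1505.05207 — 13 statements merged into one kernel-verified Lean document; each statement's English description precedes it below -/
import Mathlib

section
/- Let π : M̃ → M be a covering map between connected topological spaces, let a group G act on M̃ and on M with each group element acting by a continuous map, and suppose π is G-equivariant (π(g ∗ p) = g ∗ π(p) for all g ∈ G, p ∈ M̃). If the G-action on M is effectively free, then the G-action on M̃ is effectively free. -/
/-- If `π : M̃ → M` is an equivariant covering map of connected `G`-spaces
(each group element acting continuously) and the `G`-action on `M` is effectively free,
then the `G`-action on `M̃` is effectively free. -/
theorem effectivelyFree_of_effectivelyFree_base
    {M' M : Type*} [TopologicalSpace M'] [TopologicalSpace M]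
    [ConnectedSpace M'] [ConnectedSpace M]
    {G : Type*} [Group G] [MulAction G M'] [MulAction G M]
    (π : M' → M) (hπ : IsCoveringMap π)
    (hcont' : ∀ g : G, Continuous fun p : M' => g • p)
    (hcont : ∀ g : G, Continuous fun x : M => g • x)
    (hequiv : ∀ (g : G) (p : M'), π (g • p) = g • π p)
    (hfree : ∀ g : G, (∃ x : M, g • x = x) → ∀ x : M, g • x = x) :
    ∀ g : G, (∃ p : M', g • p = p) → ∀ p : M', g • p = p := by
  rintro g ⟨p₀, hp₀⟩ p
  have hbase : ∀ x : M, g • x = x := by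
    refine hfree g ⟨π p₀, ?_⟩
    rw [← hequiv, hp₀]
  have h := hπ.eq_of_comp_eq (g₁ := fun p : M' => g • p) (g₂ := id) (hcont' g)
    continuous_id (by funext q; simp [Function.comp, hequiv, hbase]) p₀ hp₀
  exact congr_fun h p
end

section
/- Let π : M̃ → M be a surjective covering map between connected topological spaces, let a group G act on M̃ and on M with each group element acting by a continuous map, and suppose π is G-equivariant (π(g ∗ p) = g ∗ π(p) for all g, p). Assume moreover that the deck group is realized in G: for all p, q ∈ M̃ with π(p) = π(q) there exists g₁ ∈ G such that g₁ ∗ q = p and π(g₁ ∗ x) = π(x) for every x ∈ M̃. If the G-action on M̃ is effectively free, then the G-action on M is effectively free. -/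
/-- If `π : M̃ → M` is a surjective equivariant covering map of connected
`G`-spaces (each group element acting continuously), the deck group is realized in `G`,
and the `G`-action on `M̃` is effectively free, then the `G`-action on `M` is
effectively free. -/
theorem effectivelyFree_of_effectivelyFree_cover
    {M' M : Type*} [TopologicalSpace M'] [TopologicalSpace M]
    [ConnectedSpace M'] [ConnectedSpace M]
    {G : Type*} [Group G] [MulAction G M'] [MulAction G M]
    (π : M' → M) (hπ : IsCoveringMap π) (hsurj : Function.Surjective π)
    (hcont' : ∀ g : G, Continuous fun p : M' => g • p)
    (hcont : ∀ g : G, Continuous fun x : M => g • x)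
    (hequiv : ∀ (g : G) (p : M'), π (g • p) = g • π p)
    (hdeck : ∀ p q : M', π p = π q →
      ∃ g₁ : G, g₁ • q = p ∧ ∀ x : M', π (g₁ • x) = π x)
    (hfree' : ∀ g : G, (∃ p : M', g • p = p) → ∀ p : M', g • p = p) :
    ∀ g : G, (∃ x : M, g • x = x) → ∀ x : M, g • x = x := by
  rintro g ⟨x, hx⟩ y
  obtain ⟨p, rfl⟩ := hsurj x
  have hfix : π p = π (g • p) := by rw [hequiv, hx]
  obtain ⟨g₁, hg₁, hdeckg₁⟩ := hdeck p (g • p) hfix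
  have hid : ∀ q : M', (g₁ * g) • q = q := by
    refine hfree' (g₁ * g) ⟨p, ?_⟩
    rwa [mul_smul]
  obtain ⟨q, rfl⟩ := hsurj y
  calc g • π q = π (g • q) := (hequiv g q).symm
    _ = π (g₁ • g • q) := (hdeckg₁ (g • q)).symm
    _ = π ((g₁ * g) • q) := by rw [mul_smul]
    _ = π q := by rw [hid q]
end

section
/- The biquotient action of Sp(1) on Sp(3) given by p ∗ A = diag(p,1,1) · A · diag(1,p,p)⁻¹ is free: for every unit quaternion p and every 3×3 quaternionic matrix A with Aᴴ·A = I (where Aᴴ is the conjugate transpose), if diag(p,1,1) · A = A · diag(1,p,p), then p = 1. -/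
open Matrix Quaternion

/-- The biquotient action of `Sp(1)` on `Sp(3)` given by
`p ∗ A = diag(p,1,1) ⬝ A ⬝ diag(1,p,p)⁻¹` is free: for every unit quaternion `p` and
every `A ∈ Sp(3)`, if `diag(p,1,1) ⬝ A = A ⬝ diag(1,p,p)` then `p = 1`. -/
theorem sp3_biquotient_free (p : Quaternion ℝ) (hp : ‖p‖ = 1)
    (A : Matrix (Fin 3) (Fin 3) (Quaternion ℝ)) (hA : Aᴴ * A = 1)
    (h : Matrix.diagonal ![p, 1, 1] * A = A * Matrix.diagonal ![1, p, p]) :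
    p = 1 := by
  by_contra hne
  have hp1 : p - 1 ≠ 0 := sub_ne_zero.mpr hne
  have key : ∀ i j, ![p, 1, 1] i * A i j = A i j * ![1, p, p] j := by
    intro i j
    have := congrFun (congrFun h i) j
    rwa [Matrix.diagonal_mul, Matrix.mul_diagonal] at this
  have h00 : A 0 0 = 0 := by
    have hk := key 0 0
    simp only [Matrix.cons_val_zero, mul_one] at hk
    have : (p - 1) * A 0 0 = 0 := by rw [sub_mul, one_mul, hk, sub_self]
    exact (mul_eq_zero.mp this).resolve_left hp1
  have hz : ∀ i j, i ≠ 0 → j ≠ 0 → A i j = 0 := by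
    intro i j hi hj
    have hk := key i j
    have h1 : ![p, 1, 1] i = 1 := by
      fin_cases i <;> simp_all
    have h2 : ![1, p, p] j = p := by
      fin_cases j <;> simp_all
    rw [h1, h2, one_mul] at hk
    have : A i j * (p - 1) = 0 := by rw [mul_sub, mul_one, ← hk, sub_self]
    exact (mul_eq_zero.mp this).resolve_right hp1
  have h11 := hz 1 1 (by decide) (by decide)
  have h21 := hz 2 1 (by decide) (by decide)
  have h12 := hz 1 2 (by decide) (by decide)
  have h22 := hz 2 2 (by decide) (by decide)
  have e11 : star (A 0 1) * A 0 1 = 1 := by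
    have := congrFun (congrFun hA 1) 1
    rw [Matrix.mul_apply, Fin.sum_univ_three] at this
    simpa [Matrix.conjTranspose_apply, h11, h21] using this
  have e22 : star (A 0 2) * A 0 2 = 1 := by
    have := congrFun (congrFun hA 2) 2
    rw [Matrix.mul_apply, Fin.sum_univ_three] at this
    simpa [Matrix.conjTranspose_apply, h12, h22] using this
  have e12 : star (A 0 1) * A 0 2 = 0 := by
    have := congrFun (congrFun hA 1) 2
    rw [Matrix.mul_apply, Fin.sum_univ_three] at this
    simpa [Matrix.conjTranspose_apply, h11, h21, h12, h22] using this
  have hA01 : star (A 0 1) ≠ 0 := by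
    intro hzero
    rw [hzero, zero_mul] at e11
    exact zero_ne_one e11
  have hA02 : A 0 2 ≠ 0 := by
    intro hzero
    rw [hzero, mul_zero] at e22
    exact zero_ne_one e22
  exact (mul_ne_zero hA01 hA02) e12
end

section
/- For all octonions x and y, the endomorphisms x̂ and ŷ of 𝕆 × 𝕆 satisfy x̂ ∘ ŷ + ŷ ∘ x̂ = −2⟨x,y⟩ times the identity map of 𝕆 × 𝕆. In particular, x̂ ∘ x̂ = −‖x‖² · id. -/
/-!
Since `x̂ (ŷ (u, v)) = -(x̄ (y u), x (ȳ v))`, the claim comes down to the two octonion identities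
`x̄ (y u) + ȳ (x u) = 2⟨x, y⟩ u` and `x (ȳ v) + y (x̄ v) = 2⟨x, y⟩ v`, the second being the first
for `x̄, ȳ`. By bilinearity it suffices to treat `x = y`, i.e. `x̄ (x u) = ‖x‖² u`; on Cayley–Dickson
pairs this is a short quaternion computation, because `q q̄ = q̄ q = |q|²` is a central real scalar.
-/

noncomputable section

/-- The octonions, realized as pairs of real quaternions (Cayley–Dickson construction). -/
abbrev Octonion : Type := Quaternion ℝ × Quaternion ℝ

/-- Octonion multiplication: `(a,b)·(c,d) = (a·c − conj(d)·b, d·a + b·conj(c))`. -/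
def omul (x y : Octonion) : Octonion :=
  (x.1 * y.1 - star y.2 * x.2, y.2 * x.1 + x.2 * star y.1)

/-- Octonion conjugation: `conj (a,b) = (conj a, −b)`. -/
def oconj (x : Octonion) : Octonion := (star x.1, -x.2)

/-- The unit octonion `1 = (1,0)`. -/
def oone : Octonion := (1, 0)

/-- The real inner product `⟨(a,b),(c,d)⟩ = Re(a·conj c) + Re(b·conj d)` on the octonions. -/
def oinner (x y : Octonion) : ℝ := (x.1 * star y.1).re + (x.2 * star y.2).re

/-- The Clifford-algebra embedding: `x̂ (y,z) = (−conj(x)·z, x·y)` on `𝕆 × 𝕆`. -/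
def hat (x : Octonion) (p : Octonion × Octonion) : Octonion × Octonion :=
  (-(omul (oconj x) p.2), omul x p.1)

open Quaternion

lemma oconj_add (x y : Octonion) : oconj (x + y) = oconj x + oconj y :=
  Prod.ext (star_add _ _) (neg_add _ _)

@[simp] lemma oconj_oconj (x : Octonion) : oconj (oconj x) = x := by
  simp [oconj]

lemma omul_add (x y z : Octonion) : omul x (y + z) = omul x y + omul x z := by
  refine Prod.ext ?_ ?_ <;>
    simp only [omul, Prod.fst_add, Prod.snd_add, star_add, mul_add, add_mul] <;> abel

lemma add_omul (x y z : Octonion) : omul (x + y) z = omul x z + omul y z := by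
  refine Prod.ext ?_ ?_ <;> simp only [omul, Prod.fst_add, Prod.snd_add, mul_add, add_mul] <;> abel

lemma omul_neg (x y : Octonion) : omul x (-y) = -omul x y := by
  refine Prod.ext ?_ ?_ <;>
    simp only [omul, Prod.fst_neg, Prod.snd_neg, star_neg, mul_neg, neg_mul] <;> abel

lemma oinner_comm (x y : Octonion) : oinner x y = oinner y x := by
  simp only [oinner]
  rw [← re_star (x.1 * star y.1), ← re_star (x.2 * star y.2)]
  simp

lemma oinner_add_add_self (x y : Octonion) :
    oinner (x + y) (x + y) = oinner x x + 2 * oinner x y + oinner y y := by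
  have := oinner_comm y x
  simp only [oinner, Prod.fst_add, Prod.snd_add, star_add, mul_add, add_mul, re_add] at *
  linarith

@[simp] lemma oinner_oconj_oconj (x y : Octonion) : oinner (oconj x) (oconj y) = oinner x y := by
  simp [oinner, oconj]

lemma oinner_self (x : Octonion) : oinner x x = normSq x.1 + normSq x.2 := rfl

lemma oconj_omul_omul_self (x u : Octonion) : omul (oconj x) (omul x u) = oinner x x • u := by
  obtain ⟨a, b⟩ := x
  obtain ⟨c, d⟩ := u
  simp only [omul, oconj, oinner_self, Prod.smul_mk, ← coe_mul_eq_smul, coe_add, star_sub,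
    star_add, star_mul, star_star]
  refine Prod.ext ?_ ?_ <;> dsimp only
  · calc _ = star a * a * c + c * (star b * b) := by noncomm_ring
      _ = _ := by rw [star_mul_self, star_mul_self, ← coe_commutes, add_mul]
  · calc _ = d * (a * star a) + b * star b * d := by noncomm_ring
      _ = _ := by rw [self_mul_star, self_mul_star, ← coe_commutes, add_mul, add_comm]

lemma omul_omul_oconj_self (x v : Octonion) : omul x (omul (oconj x) v) = oinner x x • v := by
  simpa using oconj_omul_omul_self (oconj x) v

lemma oconj_omul_omul_add (x y u : Octonion) :
    omul (oconj x) (omul y u) + omul (oconj y) (omul x u) = (2 * oinner x y) • u := by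
  have h := oconj_omul_omul_self (x + y) u
  simp only [oconj_add, add_omul, omul_add, oconj_omul_omul_self, oinner_add_add_self] at h
  linear_combination (norm := module) h

lemma omul_omul_oconj_add (x y v : Octonion) :
    omul x (omul (oconj y) v) + omul y (omul (oconj x) v) = (2 * oinner x y) • v := by
  simpa using oconj_omul_omul_add (oconj x) (oconj y) v

lemma hat_hat (x y u v : Octonion) :
    hat x (hat y (u, v)) = -(omul (oconj x) (omul y u), omul x (omul (oconj y) v)) := by
  simp [hat, omul_neg]

/-- For all octonions `x, y`, `x̂ ∘ ŷ + ŷ ∘ x̂ = −2⟨x,y⟩ • id` on `𝕆 × 𝕆`.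
In particular, `x̂ ∘ x̂ = −‖x‖² • id`. -/
theorem hat_anticommute :
    (∀ (x y : Octonion) (p : Octonion × Octonion),
      hat x (hat y p) + hat y (hat x p) = (-(2 * oinner x y)) • p) ∧
    (∀ (x : Octonion) (p : Octonion × Octonion),
      hat x (hat x p) = (-(oinner x x)) • p) := by
  constructor
  · rintro x y ⟨u, v⟩
    rw [hat_hat, hat_hat, ← neg_add, Prod.mk_add_mk, oconj_omul_omul_add, omul_omul_oconj_add,
      neg_smul]
    rfl
  · rintro x ⟨u, v⟩
    rw [hat_hat, oconj_omul_omul_self, omul_omul_oconj_self, neg_smul]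
    rfl
end
end

section
/- Let v and x be purely imaginary octonions with ⟨v,x⟩ = 0. Then left multiplications by v and x anticommute: for every octonion y, v·(x·y) = −x·(v·y), i.e. L_v ∘ L_x = −L_x ∘ L_v. -/
noncomputable section

/-! For imaginary `v` and `x` the left multiplications satisfy the Clifford relation
`L_v L_x + L_x L_v = -2⟨v, x⟩`. In Cayley–Dickson coordinates `v = (a, b)`, `x = (c, d)`,
`y = (e, f)`, the anticommutator is `((ac + ca)e - e(b̄d + d̄b), f(ac + ca) - (bd̄ + db̄)f)`,
and for imaginary quaternions `a, c` all of `ac + ca`, `b̄d + d̄b`, `bd̄ + db̄` are real scalars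
whose sums give `-2⟨v, x⟩`. -/

namespace Quaternion

variable {R : Type*} [CommRing R]

theorem re_mul_comm (p q : ℍ[R]) : (p * q).re = (q * p).re := by
  simp only [re_mul]; ring

theorem mul_star_add_mul_star (p q : ℍ[R]) :
    p * star q + q * star p = ((2 * (p * star q).re : R) : ℍ[R]) := by
  simpa only [star_mul, star_star] using self_add_star' (p * star q)

theorem star_mul_add_star_mul (p q : ℍ[R]) :
    star p * q + star q * p = ((2 * (p * star q).re : R) : ℍ[R]) := by
  have h := mul_star_add_mul_star (star p) (star q)
  rw [star_star, star_star] at h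
  rw [h, re_mul_comm, ← re_star, star_mul, star_star]

theorem mul_add_mul_of_star_eq_neg {a c : ℍ[R]} (ha : star a = -a) (hc : star c = -c) :
    a * c + c * a = -((2 * (a * star c).re : R) : ℍ[R]) := by
  rw [← mul_star_add_mul_star, ha, hc]
  noncomm_ring

end Quaternion

open Quaternion

theorem oinner_oone (x : Octonion) : oinner x oone = x.1.re := by
  simp [oinner, oone]

theorem omul_omul_add_omul_omul {v x : Octonion} (hv : oinner v oone = 0)
    (hx : oinner x oone = 0) (y : Octonion) :
    omul v (omul x y) + omul x (omul v y) = (-2 * oinner v x) • y := by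
  obtain ⟨a, b⟩ := v
  obtain ⟨c, d⟩ := x
  obtain ⟨e, f⟩ := y
  rw [oinner_oone] at hv hx
  have ha : star a = -a := star_eq_neg.2 hv
  have hc : star c = -c := star_eq_neg.2 hx
  have hac := mul_add_mul_of_star_eq_neg ha hc
  simp only [omul, oinner, Prod.mk_add_mk, Prod.smul_mk, Prod.mk.injEq]
  constructor
  · calc _ = (a * c + c * a) * e - e * (star b * d + star d * b) := by
          simp only [star_add, star_mul, star_star, ha, hc]; noncomm_ring
      _ = _ := by
          rw [hac, star_mul_add_star_mul]
          simp only [neg_mul, coe_mul_eq_smul, mul_coe_eq_smul]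
          module
  · calc _ = f * (a * c + c * a) - (b * star d + d * star b) * f := by
          simp only [star_sub, star_mul, star_star, ha, hc]; noncomm_ring
      _ = _ := by
          rw [hac, mul_star_add_mul_star]
          simp only [mul_neg, coe_mul_eq_smul, mul_coe_eq_smul]
          module

/-- Left multiplications by orthogonal purely imaginary octonions
anticommute: if `⟨v,1⟩ = ⟨x,1⟩ = 0` and `⟨v,x⟩ = 0`, then
`v·(x·y) = −x·(v·y)` for every octonion `y`. -/
theorem left_mul_anticommute (v x : Octonion)
    (hv : oinner v oone = 0) (hx : oinner x oone = 0) (hvx : oinner v x = 0) :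
    ∀ y : Octonion, omul v (omul x y) = -(omul x (omul v y)) := by
  intro y
  rw [eq_neg_iff_add_eq_zero, omul_omul_add_omul_omul hv hx, hvx, mul_zero, zero_smul]
end
end

section
/- For all α, β, γ ∈ ℝ, the 8×8 real matrices A₁(α) = cos(α)·I₈ + sin(α)·S₁, A₂(β) = cos(β)·I₈ + sin(β)·S₂, A₃(γ) = cos(γ)·I₈ + sin(γ)·S₃ pairwise commute; the matrix B is invertible; and B · A₁(α) · A₂(β) · A₃(γ) · B⁻¹ = R(α+β−γ, α−β−γ, α−β+γ, α+β+γ). -/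
noncomputable section

open Real Matrix

section evAux
variable {X : Type*}
lemma ev0 (a0 a1 a2 a3 a4 a5 a6 a7 : X) : ![a0,a1,a2,a3,a4,a5,a6,a7] (0 : Fin 8) = a0 := rfl
lemma ev1 (a0 a1 a2 a3 a4 a5 a6 a7 : X) : ![a0,a1,a2,a3,a4,a5,a6,a7] (1 : Fin 8) = a1 := rfl
lemma ev2 (a0 a1 a2 a3 a4 a5 a6 a7 : X) : ![a0,a1,a2,a3,a4,a5,a6,a7] (2 : Fin 8) = a2 := rfl
lemma ev3 (a0 a1 a2 a3 a4 a5 a6 a7 : X) : ![a0,a1,a2,a3,a4,a5,a6,a7] (3 : Fin 8) = a3 := rfl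
lemma ev4 (a0 a1 a2 a3 a4 a5 a6 a7 : X) : ![a0,a1,a2,a3,a4,a5,a6,a7] (4 : Fin 8) = a4 := rfl
lemma ev5 (a0 a1 a2 a3 a4 a5 a6 a7 : X) : ![a0,a1,a2,a3,a4,a5,a6,a7] (5 : Fin 8) = a5 := rfl
lemma ev6 (a0 a1 a2 a3 a4 a5 a6 a7 : X) : ![a0,a1,a2,a3,a4,a5,a6,a7] (6 : Fin 8) = a6 := rfl
lemma ev7 (a0 a1 a2 a3 a4 a5 a6 a7 : X) : ![a0,a1,a2,a3,a4,a5,a6,a7] (7 : Fin 8) = a7 := rfl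
lemma ext8 {M N : Matrix (Fin 8) (Fin 8) X}
    (h00 : M 0 0 = N 0 0) (h01 : M 0 1 = N 0 1) (h02 : M 0 2 = N 0 2) (h03 : M 0 3 = N 0 3) (h04 : M 0 4 = N 0 4) (h05 : M 0 5 = N 0 5) (h06 : M 0 6 = N 0 6) (h07 : M 0 7 = N 0 7) (h10 : M 1 0 = N 1 0) (h11 : M 1 1 = N 1 1) (h12 : M 1 2 = N 1 2) (h13 : M 1 3 = N 1 3) (h14 : M 1 4 = N 1 4) (h15 : M 1 5 = N 1 5) (h16 : M 1 6 = N 1 6) (h17 : M 1 7 = N 1 7) (h20 : M 2 0 = N 2 0) (h21 : M 2 1 = N 2 1) (h22 : M 2 2 = N 2 2) (h23 : M 2 3 = N 2 3) (h24 : M 2 4 = N 2 4) (h25 : M 2 5 = N 2 5) (h26 : M 2 6 = N 2 6) (h27 : M 2 7 = N 2 7) (h30 : M 3 0 = N 3 0) (h31 : M 3 1 = N 3 1) (h32 : M 3 2 = N 3 2) (h33 : M 3 3 = N 3 3) (h34 : M 3 4 = N 3 4) (h35 : M 3 5 = N 3 5) (h36 : M 3 6 = N 3 6) (h37 : M 3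 7 = N 3 7) (h40 : M 4 0 = N 4 0) (h41 : M 4 1 = N 4 1) (h42 : M 4 2 = N 4 2) (h43 : M 4 3 = N 4 3) (h44 : M 4 4 = N 4 4) (h45 : M 4 5 = N 4 5) (h46 : M 4 6 = N 4 6) (h47 : M 4 7 = N 4 7) (h50 : M 5 0 = N 5 0) (h51 : M 5 1 = N 5 1) (h52 : M 5 2 = N 5 2) (h53 : M 5 3 = N 5 3) (h54 : M 5 4 = N 5 4) (h55 : M 5 5 = N 5 5) (h56 : M 5 6 = N 5 6) (h57 : M 5 7 = N 5 7) (h60 : M 6 0 = N 6 0) (h61 : M 6 1 = N 6 1) (h62 : M 6 2 = N 6 2) (h63 : M 6 3 = N 6 3) (h64 : M 6 4 = N 6 4) (h65 : M 6 5 = N 6 5) (h66 : M 6 6 = N 6 6) (h67 : M 6 7 = N 6 7) (h70 : M 7 0 = N 7 0) (h71 : M 7 1 = N 7 1) (h72 : M 7 2 = N 7 2) (h73 : M 7 3 = N 7 3) (h74 : M 7 4 = N 7 4) (h75 : M 7 5 = N 7 5) (h76 : M 7 6 = N 7 6) (h77 : M 7 7 = N 7 7) : M = N := by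
  ext i j
  fin_cases i <;> fin_cases j <;> assumption
end evAux


/-- The skew matrix `S₁`. -/
def S1 : Matrix (Fin 8) (Fin 8) ℝ := Matrix.of
  ![![0, 0, 0, 1, 0, 0, 0, 0],
    ![0, 0, 1, 0, 0, 0, 0, 0],
    ![0, -1, 0, 0, 0, 0, 0, 0],
    ![-1, 0, 0, 0, 0, 0, 0, 0],
    ![0, 0, 0, 0, 0, 0, 0, -1],
    ![0, 0, 0, 0, 0, 0, 1, 0],
    ![0, 0, 0, 0, 0, -1, 0, 0],
    ![0, 0, 0, 0, 1, 0, 0, 0]]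

/-- The skew matrix `S₂`. -/
def S2 : Matrix (Fin 8) (Fin 8) ℝ := Matrix.of
  ![![0, 0, 0, 0, 0, 0, 0, 1],
    ![0, 0, 0, 0, 0, 0, 1, 0],
    ![0, 0, 0, 0, 0, -1, 0, 0],
    ![0, 0, 0, 0, 1, 0, 0, 0],
    ![0, 0, 0, -1, 0, 0, 0, 0],
    ![0, 0, 1, 0, 0, 0, 0, 0],
    ![0, -1, 0, 0, 0, 0, 0, 0],
    ![-1, 0, 0, 0, 0, 0, 0, 0]]

/-- The skew matrix `S₃`. -/
def S3 : Matrix (Fin 8) (Fin 8) ℝ := Matrix.of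
  ![![0, 0, 0, -1, 0, 0, 0, 0],
    ![0, 0, 1, 0, 0, 0, 0, 0],
    ![0, -1, 0, 0, 0, 0, 0, 0],
    ![1, 0, 0, 0, 0, 0, 0, 0],
    ![0, 0, 0, 0, 0, 0, 0, 1],
    ![0, 0, 0, 0, 0, 0, 1, 0],
    ![0, 0, 0, 0, 0, -1, 0, 0],
    ![0, 0, 0, 0, -1, 0, 0, 0]]

/-- The matrix `A₁(α) = cos α · I₈ + sin α · S₁`. -/
def A1 (α : ℝ) : Matrix (Fin 8) (Fin 8) ℝ := Real.cos α • (1 : Matrix (Fin 8) (Fin 8) ℝ) + Real.sin α • S1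

/-- The matrix `A₂(β) = cos β · I₈ + sin β · S₂`. -/
def A2 (β : ℝ) : Matrix (Fin 8) (Fin 8) ℝ := Real.cos β • (1 : Matrix (Fin 8) (Fin 8) ℝ) + Real.sin β • S2

/-- The matrix `A₃(γ) = cos γ · I₈ + sin γ · S₃`. -/
def A3 (γ : ℝ) : Matrix (Fin 8) (Fin 8) ℝ := Real.cos γ • (1 : Matrix (Fin 8) (Fin 8) ℝ) + Real.sin γ • S3

/-- The conjugating matrix `B`. -/
def Bmat : Matrix (Fin 8) (Fin 8) ℝ := Matrix.of
  ![![0, 0, 0, 1, 0, 0, 0, 1],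
    ![1, 0, 0, 0, -1, 0, 0, 0],
    ![0, 0, 0, 1, 0, 0, 0, -1],
    ![1, 0, 0, 0, 1, 0, 0, 0],
    ![0, 1, 0, 0, 0, -1, 0, 0],
    ![0, 0, -1, 0, 0, 0, 1, 0],
    ![0, 1, 0, 0, 0, 1, 0, 0],
    ![0, 0, -1, 0, 0, 0, -1, 0]]

/-- The block-diagonal rotation matrix `R(θ₁,θ₂,θ₃,θ₄) = diag(Rot θ₁, Rot θ₂, Rot θ₃, Rot θ₄)`. -/
def Rmat (θ₁ θ₂ θ₃ θ₄ : ℝ) : Matrix (Fin 8) (Fin 8) ℝ := Matrix.of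
  ![![Real.cos θ₁, -Real.sin θ₁, 0, 0, 0, 0, 0, 0],
    ![Real.sin θ₁, Real.cos θ₁, 0, 0, 0, 0, 0, 0],
    ![0, 0, Real.cos θ₂, -Real.sin θ₂, 0, 0, 0, 0],
    ![0, 0, Real.sin θ₂, Real.cos θ₂, 0, 0, 0, 0],
    ![0, 0, 0, 0, Real.cos θ₃, -Real.sin θ₃, 0, 0],
    ![0, 0, 0, 0, Real.sin θ₃, Real.cos θ₃, 0, 0],
    ![0, 0, 0, 0, 0, 0, Real.cos θ₄, -Real.sin θ₄],
    ![0, 0, 0, 0, 0, 0, Real.sin θ₄, Real.cos θ₄]]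


lemma A1_eq (α : ℝ) : A1 α = Matrix.of
  ![![(Real.cos α), (0), (0), (Real.sin α), (0), (0), (0), (0)],
    ![(0), (Real.cos α), (Real.sin α), (0), (0), (0), (0), (0)],
    ![(0), (-Real.sin α), (Real.cos α), (0), (0), (0), (0), (0)],
    ![(-Real.sin α), (0), (0), (Real.cos α), (0), (0), (0), (0)],
    ![(0), (0), (0), (0), (Real.cos α), (0), (0), (-Real.sin α)],
    ![(0), (0), (0), (0), (0), (Real.cos α), (Real.sin α), (0)],
    ![(0), (0), (0), (0), (0), (-Real.sin α), (Real.cos α), (0)],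
    ![(0), (0), (0), (0), (Real.sin α), (0), (0), (Real.cos α)]] := by
  apply ext8 <;> simp only [A1, S1, Matrix.add_apply, Matrix.smul_apply,
    Matrix.of_apply, ev0, ev1, ev2, ev3, ev4, ev5, ev6, ev7, smul_eq_mul, Matrix.one_apply] <;> simp

lemma A2_eq (β : ℝ) : A2 β = Matrix.of
  ![![(Real.cos β), (0), (0), (0), (0), (0), (0), (Real.sin β)],
    ![(0), (Real.cos β), (0), (0), (0), (0), (Real.sin β), (0)],
    ![(0), (0), (Real.cos β), (0), (0), (-Real.sin β), (0), (0)],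
    ![(0), (0), (0), (Real.cos β), (Real.sin β), (0), (0), (0)],
    ![(0), (0), (0), (-Real.sin β), (Real.cos β), (0), (0), (0)],
    ![(0), (0), (Real.sin β), (0), (0), (Real.cos β), (0), (0)],
    ![(0), (-Real.sin β), (0), (0), (0), (0), (Real.cos β), (0)],
    ![(-Real.sin β), (0), (0), (0), (0), (0), (0), (Real.cos β)]] := by
  apply ext8 <;> simp only [A2, S2, Matrix.add_apply, Matrix.smul_apply,
    Matrix.of_apply, ev0, ev1, ev2, ev3, ev4, ev5, ev6, ev7, smul_eq_mul, Matrix.one_apply] <;> simp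

lemma A3_eq (γ : ℝ) : A3 γ = Matrix.of
  ![![(Real.cos γ), (0), (0), (-Real.sin γ), (0), (0), (0), (0)],
    ![(0), (Real.cos γ), (Real.sin γ), (0), (0), (0), (0), (0)],
    ![(0), (-Real.sin γ), (Real.cos γ), (0), (0), (0), (0), (0)],
    ![(Real.sin γ), (0), (0), (Real.cos γ), (0), (0), (0), (0)],
    ![(0), (0), (0), (0), (Real.cos γ), (0), (0), (Real.sin γ)],
    ![(0), (0), (0), (0), (0), (Real.cos γ), (Real.sin γ), (0)],
    ![(0), (0), (0), (0), (0), (-Real.sin γ), (Real.cos γ), (0)],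
    ![(0), (0), (0), (0), (-Real.sin γ), (0), (0), (Real.cos γ)]] := by
  apply ext8 <;> simp only [A3, S3, Matrix.add_apply, Matrix.smul_apply,
    Matrix.of_apply, ev0, ev1, ev2, ev3, ev4, ev5, ev6, ev7, smul_eq_mul, Matrix.one_apply] <;> simp


def Cmat : Matrix (Fin 8) (Fin 8) ℝ := (2⁻¹ : ℝ) • Bmatᵀ

lemma hBC : Bmat * Cmat = 1 := by
  apply ext8 <;>
  · simp only [Cmat, Bmat, Matrix.mul_apply, Matrix.smul_apply, Matrix.transpose_apply,
      Fin.sum_univ_eight, Matrix.of_apply, ev0, ev1, ev2, ev3, ev4, ev5, ev6, ev7, smul_eq_mul, Matrix.one_apply]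
    all_goals try simp
    all_goals norm_num

lemma hCB : Cmat * Bmat = 1 := by
  apply ext8 <;>
  · simp only [Cmat, Bmat, Matrix.mul_apply, Matrix.smul_apply, Matrix.transpose_apply,
      Fin.sum_univ_eight, Matrix.of_apply, ev0, ev1, ev2, ev3, ev4, ev5, ev6, ev7, smul_eq_mul, Matrix.one_apply]
    all_goals try simp
    all_goals norm_num

set_option maxHeartbeats 4000000 in
lemma key (α β γ : ℝ) : Bmat * (A1 α * (A2 β * A3 γ)) =
    Rmat (α + β - γ) (α - β - γ) (α - β + γ) (α + β + γ) * Bmat := by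
  rw [A1_eq, A2_eq, A3_eq]
  apply ext8 <;>
    simp only [Bmat, Rmat, Matrix.mul_apply, Fin.sum_univ_eight, Matrix.of_apply, ev0, ev1, ev2, ev3, ev4, ev5, ev6, ev7,
      Real.cos_add, Real.cos_sub, Real.sin_add, Real.sin_sub, mul_zero, zero_mul,
      add_zero, zero_add, mul_one, one_mul, mul_neg, neg_mul, neg_neg, neg_zero] <;>
    ring

lemma comm12 (α β : ℝ) : A1 α * A2 β = A2 β * A1 α := by
  rw [A1_eq, A2_eq]
  apply ext8 <;>
  · simp only [Matrix.mul_apply, Fin.sum_univ_eight, Matrix.of_apply, ev0, ev1, ev2, ev3, ev4, ev5, ev6, ev7]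
    ring

lemma comm13 (α γ : ℝ) : A1 α * A3 γ = A3 γ * A1 α := by
  rw [A1_eq, A3_eq]
  apply ext8 <;>
  · simp only [Matrix.mul_apply, Fin.sum_univ_eight, Matrix.of_apply, ev0, ev1, ev2, ev3, ev4, ev5, ev6, ev7]
    ring

lemma comm23 (β γ : ℝ) : A2 β * A3 γ = A3 γ * A2 β := by
  rw [A2_eq, A3_eq]
  apply ext8 <;>
  · simp only [Matrix.mul_apply, Fin.sum_univ_eight, Matrix.of_apply, ev0, ev1, ev2, ev3, ev4, ev5, ev6, ev7]
    ring

/-- The matrices `A₁(α), A₂(β), A₃(γ)` pairwise commute, `B` is invertible,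
and `B · A₁(α) · A₂(β) · A₃(γ) · B⁻¹ = R(α+β−γ, α−β−γ, α−β+γ, α+β+γ)`. -/
theorem A_commute_and_conjugate (α β γ : ℝ) :
    A1 α * A2 β = A2 β * A1 α ∧ A1 α * A3 γ = A3 γ * A1 α ∧ A2 β * A3 γ = A3 γ * A2 β ∧
    IsUnit Bmat ∧
    Bmat * A1 α * A2 β * A3 γ * Bmat⁻¹ =
      Rmat (α + β - γ) (α - β - γ) (α - β + γ) (α + β + γ) := by
  refine ⟨comm12 α β, comm13 α γ, comm23 β γ, ⟨⟨Bmat, Cmat, hBC, hCB⟩, rfl⟩, ?_⟩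
  have hinv : Bmat⁻¹ = Cmat := Matrix.inv_eq_right_inv hBC
  rw [hinv]
  have h2 : Bmat * A1 α * A2 β * A3 γ * Cmat =
      Rmat (α + β - γ) (α - β - γ) (α - β + γ) (α + β + γ) * (Bmat * Cmat) := by
    conv_rhs => rw [← Matrix.mul_assoc, ← key α β γ]
    simp only [Matrix.mul_assoc]
  rw [h2, hBC, mul_one]
end
end

section
/- For every θ ∈ ℝ, if the matrices R(2θ, 2θ, 0) and R(2θ, θ, θ) are conjugate in SO(7) (i.e., there exists g ∈ SO(7) with g · R(2θ,2θ,0) · g⁻¹ = R(2θ,θ,θ)), then both matrices equal the identity I₇. Consequently the corresponding biquotient action (pair (D,E)) descends to an effectively free action on SO(7). -/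
noncomputable section

open Matrix

/-- The block-diagonal matrix `R(θ₁,θ₂,θ₃) = diag(Rot θ₁, Rot θ₂, Rot θ₃, 1) ∈ SO(7)`. -/
def R7 (a b c : ℝ) : Matrix (Fin 7) (Fin 7) ℝ := Matrix.of
  ![![Real.cos a, -Real.sin a, 0, 0, 0, 0, 0],
    ![Real.sin a, Real.cos a, 0, 0, 0, 0, 0],
    ![0, 0, Real.cos b, -Real.sin b, 0, 0, 0],
    ![0, 0, Real.sin b, Real.cos b, 0, 0, 0],
    ![0, 0, 0, 0, Real.cos c, -Real.sin c, 0],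
    ![0, 0, 0, 0, Real.sin c, Real.cos c, 0],
    ![0, 0, 0, 0, 0, 0, 1]]

lemma R7_trace (a b c : ℝ) :
    (R7 a b c).trace = 2 * Real.cos a + 2 * Real.cos b + 2 * Real.cos c + 1 := by
  simp [R7, Matrix.trace, Fin.sum_univ_succ, Matrix.cons_val_succ, Matrix.diag]
  ring

lemma R7_trace_sq (a b c : ℝ) :
    ((R7 a b c) * (R7 a b c)).trace =
      2 * (Real.cos a ^ 2 - Real.sin a ^ 2) + 2 * (Real.cos b ^ 2 - Real.sin b ^ 2)
      + 2 * (Real.cos c ^ 2 - Real.sin c ^ 2) + 1 := by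
  simp [R7, Matrix.trace, Matrix.mul_apply, Fin.sum_univ_succ, Matrix.cons_val_succ, Matrix.diag]
  ring


/-- If `R(2θ,2θ,0)` and `R(2θ,θ,θ)` are conjugate in `SO(7)`, then both are
the identity.  Hence the biquotient action of the pair `(D,E)` descends to an effectively
free action on `SO(7)`. -/
theorem pairDE_descends (θ : ℝ)
    (h : ∃ g : Matrix (Fin 7) (Fin 7) ℝ, gᵀ * g = 1 ∧ g.det = 1 ∧
      g * R7 (2 * θ) (2 * θ) 0 * g⁻¹ = R7 (2 * θ) θ θ) :
    R7 (2 * θ) (2 * θ) 0 = 1 ∧ R7 (2 * θ) θ θ = 1 := by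
  obtain ⟨g, hg, -, hconj⟩ := h
  have hginv : g⁻¹ = gᵀ := Matrix.inv_eq_left_inv hg
  set A := R7 (2 * θ) (2 * θ) 0 with hA
  set B := R7 (2 * θ) θ θ with hBdef
  have hB : B = g * A * gᵀ := by rw [← hconj, hginv]
  -- trace equality
  have ht : B.trace = A.trace := by
    rw [hB, Matrix.trace_mul_cycle, hg, Matrix.one_mul]
  -- trace of squares
  have hB2 : B * B = g * (A * A) * gᵀ := by
    rw [hB]
    calc g * A * gᵀ * (g * A * gᵀ) = g * A * (gᵀ * g) * (A * gᵀ) := by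
          simp only [Matrix.mul_assoc]
      _ = g * (A * A) * gᵀ := by rw [hg, Matrix.mul_one]; simp only [Matrix.mul_assoc]
  have ht2 : (B * B).trace = (A * A).trace := by
    rw [hB2, Matrix.trace_mul_cycle, hg, Matrix.one_mul]
  -- translate to trigonometry
  rw [hA, hBdef, R7_trace, R7_trace] at ht
  rw [hA, hBdef, R7_trace_sq, R7_trace_sq] at ht2
  set c := Real.cos θ with hc
  set s := Real.sin θ with hs
  have hc2 : Real.cos (2 * θ) = c ^ 2 - s ^ 2 := by
    rw [Real.cos_two_mul, Real.sin_sq θ]; ring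
  have hs2 : Real.sin (2 * θ) = 2 * s * c := by rw [Real.sin_two_mul]
  have hpy : s ^ 2 + c ^ 2 = 1 := Real.sin_sq_add_cos_sq θ
  rw [hc2, Real.cos_zero] at ht
  rw [hc2, hs2, Real.cos_zero, Real.sin_zero] at ht2
  -- deduce c = 1, s = 0
  have hcc : c * (c - 1) = 0 := by nlinarith [ht]
  have hc1 : c = 1 := by
    rcases mul_eq_zero.mp hcc with h0 | h1
    · exfalso; nlinarith [ht2, ht]
    · linarith
  have hs0 : s = 0 := by
    have : s ^ 2 = 0 := by nlinarith
    exact pow_eq_zero_iff (n := 2) (by norm_num) |>.mp this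
  have e1 : Real.cos (2 * θ) = 1 := by rw [hc2, hc1, hs0]; norm_num
  have e2 : Real.sin (2 * θ) = 0 := by rw [hs2, hs0]; ring
  constructor <;>
  · ext i j
    fin_cases i <;> fin_cases j <;>
      simp [R7, e1, e2, hA, hBdef, ← hc, ← hs, hc1, hs0, Matrix.one_apply] <;> rfl
end
end

section
/- For all θ, φ ∈ ℝ, if the matrices R(θ, θ, 2φ) and R(2φ, 2φ, 0) are conjugate in SO(7) (i.e., there exists g ∈ SO(7) with g · R(θ,θ,2φ) · g⁻¹ = R(2φ,2φ,0)), then both matrices equal the identity I₇. Consequently the SU(2)² action on SO(7) determined by the pair (2φ₁₀ + φ₀₂, φ₀₀ + 2φ₀₂) is effectively free. -/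
noncomputable section

open Matrix

lemma cons_val_five' {α : Type*} {m : ℕ} (x : α) (u : Fin m.succ.succ.succ.succ.succ → α) :
    Matrix.vecCons x u 5 = Matrix.vecHead (Matrix.vecTail (Matrix.vecTail (Matrix.vecTail
      (Matrix.vecTail u)))) := rfl

lemma cons_val_six' {α : Type*} {m : ℕ} (x : α) (u : Fin m.succ.succ.succ.succ.succ.succ → α) :
    Matrix.vecCons x u 6 = Matrix.vecHead (Matrix.vecTail (Matrix.vecTail (Matrix.vecTail
      (Matrix.vecTail (Matrix.vecTail u))))) := rfl

lemma R7_sq_trace (a b c : ℝ) : (R7 a b c * R7 a b c).trace =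
    2 * (Real.cos a ^ 2 - Real.sin a ^ 2) + 2 * (Real.cos b ^ 2 - Real.sin b ^ 2)
      + 2 * (Real.cos c ^ 2 - Real.sin c ^ 2) + 1 := by
  simp [Matrix.trace, R7, Fin.sum_univ_seven, Matrix.diag, Matrix.mul_apply,
    cons_val_five', cons_val_six']
  ring

lemma R7_eq_one (a b c : ℝ) (h1 : Real.cos a = 1) (h2 : Real.sin a = 0)
    (h3 : Real.cos b = 1) (h4 : Real.sin b = 0)
    (h5 : Real.cos c = 1) (h6 : Real.sin c = 0) : R7 a b c = 1 := by
  unfold R7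
  rw [h1, h2, h3, h4, h5, h6, neg_zero]
  ext i j
  fin_cases i <;> fin_cases j <;> rfl

/-- If `R(θ,θ,2φ)` and `R(2φ,2φ,0)` are conjugate in `SO(7)`, then both are
the identity.  Hence the `SU(2)²` action on `SO(7)` determined by the pair
`(2φ₁₀ + φ₀₂, φ₀₀ + 2φ₀₂)` is effectively free. -/
theorem exceptional_pair_free (θ φ : ℝ)
    (h : ∃ g : Matrix (Fin 7) (Fin 7) ℝ, gᵀ * g = 1 ∧ g.det = 1 ∧
      g * R7 θ θ (2 * φ) * g⁻¹ = R7 (2 * φ) (2 * φ) 0) :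
    R7 θ θ (2 * φ) = 1 ∧ R7 (2 * φ) (2 * φ) 0 = 1 := by
  obtain ⟨g, hg, hdet, hconj⟩ := h
  have hu : IsUnit g.det := by rw [hdet]; exact isUnit_one
  have hinv : g⁻¹ * g = 1 := Matrix.nonsing_inv_mul g hu
  have htr : (R7 θ θ (2 * φ)).trace = (R7 (2 * φ) (2 * φ) 0).trace := by
    rw [← hconj, Matrix.trace_mul_comm, ← Matrix.mul_assoc, hinv, Matrix.one_mul]
  have htr2 : (R7 θ θ (2 * φ) * R7 θ θ (2 * φ)).trace
      = (R7 (2 * φ) (2 * φ) 0 * R7 (2 * φ) (2 * φ) 0).trace := by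
    have key : R7 (2 * φ) (2 * φ) 0 * R7 (2 * φ) (2 * φ) 0
        = g * (R7 θ θ (2 * φ) * R7 θ θ (2 * φ)) * g⁻¹ := by
      rw [← hconj]
      have : g * R7 θ θ (2 * φ) * g⁻¹ * (g * R7 θ θ (2 * φ) * g⁻¹)
          = g * R7 θ θ (2 * φ) * (g⁻¹ * g) * (R7 θ θ (2 * φ) * g⁻¹) := by
        noncomm_ring
      rw [this, hinv, Matrix.mul_one]
      noncomm_ring
    have aux : (g * (R7 θ θ (2 * φ) * R7 θ θ (2 * φ)) * g⁻¹).trace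
        = (R7 θ θ (2 * φ) * R7 θ θ (2 * φ)).trace := by
      rw [Matrix.trace_mul_comm, ← Matrix.mul_assoc g⁻¹ g, hinv, Matrix.one_mul]
    rw [key, aux]
  rw [R7_trace, R7_trace] at htr
  rw [R7_sq_trace, R7_sq_trace] at htr2
  simp only [Real.cos_zero, Real.sin_zero] at htr htr2
  have p1 : Real.sin θ ^ 2 + Real.cos θ ^ 2 = 1 := Real.sin_sq_add_cos_sq θ
  have p2 : Real.sin (2 * φ) ^ 2 + Real.cos (2 * φ) ^ 2 = 1 := Real.sin_sq_add_cos_sq (2 * φ)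
  have hc : Real.cos θ = 1 := by nlinarith [sq_nonneg (Real.cos θ - 1)]
  have hd : Real.cos (2 * φ) = 1 := by nlinarith
  have hs : Real.sin θ = 0 := by nlinarith [sq_nonneg (Real.sin θ)]
  have ht : Real.sin (2 * φ) = 0 := by nlinarith [sq_nonneg (Real.sin (2 * φ))]
  exact ⟨R7_eq_one _ _ _ hc hs hc hs hd ht,
    R7_eq_one _ _ _ hd ht hd ht Real.cos_zero Real.sin_zero⟩
end
end

section
/- For every θ ∈ ℝ, if the matrices R(2θ, 0, 0, 2θ) and R(0, −θ, θ, 2θ) are conjugate in SO(8) (i.e., there exists g ∈ SO(8) with g · R(2θ,0,0,2θ) · g⁻¹ = R(0,−θ,θ,2θ)), then both matrices equal the identity I₈. -/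
noncomputable section

open Matrix

/-- The block-diagonal matrix `R(θ₁,θ₂,θ₃,θ₄) = diag(Rot θ₁, Rot θ₂, Rot θ₃, Rot θ₄) ∈ SO(8)`. -/
def R8 (a b c d : ℝ) : Matrix (Fin 8) (Fin 8) ℝ := Matrix.of
  ![![Real.cos a, -Real.sin a, 0, 0, 0, 0, 0, 0],
    ![Real.sin a, Real.cos a, 0, 0, 0, 0, 0, 0],
    ![0, 0, Real.cos b, -Real.sin b, 0, 0, 0, 0],
    ![0, 0, Real.sin b, Real.cos b, 0, 0, 0, 0],
    ![0, 0, 0, 0, Real.cos c, -Real.sin c, 0, 0],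
    ![0, 0, 0, 0, Real.sin c, Real.cos c, 0, 0],
    ![0, 0, 0, 0, 0, 0, Real.cos d, -Real.sin d],
    ![0, 0, 0, 0, 0, 0, Real.sin d, Real.cos d]]

lemma cons_val_2' {α : Type*} (a0 a1 a2 a3 a4 a5 a6 a7 : α) :
    ![a0,a1,a2,a3,a4,a5,a6,a7] (2 : Fin 8) = a2 := rfl
lemma cons_val_3' {α : Type*} (a0 a1 a2 a3 a4 a5 a6 a7 : α) :
    ![a0,a1,a2,a3,a4,a5,a6,a7] (3 : Fin 8) = a3 := rfl
lemma cons_val_4' {α : Type*} (a0 a1 a2 a3 a4 a5 a6 a7 : α) :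
    ![a0,a1,a2,a3,a4,a5,a6,a7] (4 : Fin 8) = a4 := rfl
lemma cons_val_5' {α : Type*} (a0 a1 a2 a3 a4 a5 a6 a7 : α) :
    ![a0,a1,a2,a3,a4,a5,a6,a7] (5 : Fin 8) = a5 := rfl
lemma cons_val_6' {α : Type*} (a0 a1 a2 a3 a4 a5 a6 a7 : α) :
    ![a0,a1,a2,a3,a4,a5,a6,a7] (6 : Fin 8) = a6 := rfl
lemma cons_val_7' {α : Type*} (a0 a1 a2 a3 a4 a5 a6 a7 : α) :
    ![a0,a1,a2,a3,a4,a5,a6,a7] (7 : Fin 8) = a7 := rfl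

lemma trace_R8 (a b c d : ℝ) :
    (R8 a b c d).trace = 2 * Real.cos a + 2 * Real.cos b + 2 * Real.cos c + 2 * Real.cos d := by
  simp only [Matrix.trace, Matrix.diag, Fin.sum_univ_eight, R8, Matrix.of_apply, Matrix.cons_val_zero, Matrix.cons_val_one, Matrix.head_cons, cons_val_2', cons_val_3', cons_val_4', cons_val_5', cons_val_6', cons_val_7']
  ring

lemma trace_R8_sq (a b c d : ℝ) :
    (R8 a b c d * R8 a b c d).trace =
      2 * (Real.cos a ^ 2 - Real.sin a ^ 2) + 2 * (Real.cos b ^ 2 - Real.sin b ^ 2)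
      + 2 * (Real.cos c ^ 2 - Real.sin c ^ 2) + 2 * (Real.cos d ^ 2 - Real.sin d ^ 2) := by
  simp only [Matrix.trace, Matrix.diag, Matrix.mul_apply, Fin.sum_univ_eight, R8, Matrix.of_apply, Matrix.cons_val_zero, Matrix.cons_val_one, Matrix.head_cons, cons_val_2', cons_val_3', cons_val_4', cons_val_5', cons_val_6', cons_val_7']
  ring

/-- If `R(2θ,0,0,2θ)` and `R(0,−θ,θ,2θ)` are conjugate in `SO(8)`, then
both are the identity. -/
theorem pairDE_spin7 (θ : ℝ)
    (h : ∃ g : Matrix (Fin 8) (Fin 8) ℝ, gᵀ * g = 1 ∧ g.det = 1 ∧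
      g * R8 (2 * θ) 0 0 (2 * θ) * g⁻¹ = R8 0 (-θ) θ (2 * θ)) :
    R8 (2 * θ) 0 0 (2 * θ) = 1 ∧ R8 0 (-θ) θ (2 * θ) = 1 := by
  obtain ⟨g, hg1, _, hconj⟩ := h
  set A := R8 (2 * θ) 0 0 (2 * θ) with hA
  set B := R8 0 (-θ) θ (2 * θ) with hB
  have hinv : g⁻¹ = gᵀ := Matrix.inv_eq_left_inv hg1
  have hginv : g⁻¹ * g = 1 := by rw [hinv]; exact hg1
  have htr : B.trace = A.trace := by
    rw [← hconj, Matrix.trace_mul_comm, ← mul_assoc, hginv, one_mul]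
  have hsq : B * B = g * (A * A) * g⁻¹ := by
    rw [← hconj]
    calc g * A * g⁻¹ * (g * A * g⁻¹) = g * A * (g⁻¹ * g) * A * g⁻¹ := by
          noncomm_ring
      _ = g * (A * A) * g⁻¹ := by rw [hginv]; noncomm_ring
  have htr2 : (B * B).trace = (A * A).trace := by
    rw [hsq, Matrix.trace_mul_comm, ← mul_assoc, hginv, one_mul]
  rw [hA, hB, trace_R8, trace_R8] at htr
  rw [hA, hB, trace_R8_sq, trace_R8_sq] at htr2
  have hpy : Real.sin θ ^ 2 + Real.cos θ ^ 2 = 1 := Real.sin_sq_add_cos_sq θ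
  have hc2 : Real.cos (2 * θ) = 2 * Real.cos θ ^ 2 - 1 := Real.cos_two_mul θ
  have hs2 : Real.sin (2 * θ) = 2 * Real.sin θ * Real.cos θ := Real.sin_two_mul θ
  simp only [Real.cos_neg, Real.sin_neg, Real.cos_zero, Real.sin_zero] at htr htr2
  rw [hc2] at htr
  rw [hc2, hs2] at htr2
  -- derive cos θ = 1
  have hc : Real.cos θ = 1 := by nlinarith [sq_nonneg (Real.cos θ - 1), sq_nonneg (Real.cos θ), sq_nonneg (Real.sin θ)]
  have hs : Real.sin θ = 0 := by nlinarith
  have hc2' : Real.cos (2 * θ) = 1 := by rw [hc2, hc]; ring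
  have hs2' : Real.sin (2 * θ) = 0 := by rw [hs2, hs]; ring
  constructor <;>
  · ext i j
    fin_cases i <;> fin_cases j <;>
      (simp [hA, hB, Matrix.one_apply, hc, hs, hc2', hs2', Matrix.vecHead, Matrix.vecTail, Function.comp, R8, Matrix.of_apply, Matrix.cons_val_zero, Matrix.cons_val_one, Matrix.head_cons, cons_val_2', cons_val_3', cons_val_4', cons_val_5', cons_val_6', cons_val_7'] <;> rfl)
end
end

section
/- For all θ, φ ∈ ℝ, if the matrices R(3θ, θ, θ, 3θ) and R(0, −φ, φ, 2φ) are conjugate in SO(8) (i.e., there exists g ∈ SO(8) with g · R(3θ,θ,θ,3θ) · g⁻¹ = R(0,−φ,φ,2φ)), then both matrices equal the identity I₈. -/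
noncomputable section

open Matrix

set_option maxHeartbeats 2000000

lemma R8_mul (a b c d a' b' c' d' : ℝ) :
    R8 a b c d * R8 a' b' c' d' = R8 (a+a') (b+b') (c+c') (d+d') := by
  ext i j
  fin_cases i <;> fin_cases j <;>
    simp [R8, Matrix.mul_apply, Fin.sum_univ_eight, Real.cos_add, Real.sin_add,
      Matrix.cons_val_succ,
      Matrix.vecHead, Matrix.vecTail, Function.comp, Fin.ext_iff,
      show (⟨5, by norm_num⟩ : Fin 8) = (4 : Fin 7).succ from rfl,
      show (⟨6, by norm_num⟩ : Fin 8) = (5 : Fin 7).succ from rfl,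
      show (⟨7, by norm_num⟩ : Fin 8) = (6 : Fin 7).succ from rfl,
      show (5 : Fin 8) = (4 : Fin 7).succ from rfl,
      show (6 : Fin 8) = (5 : Fin 7).succ from rfl,
      show (7 : Fin 8) = (6 : Fin 7).succ from rfl,
      show (5 : Fin 7) = (4 : Fin 6).succ from rfl,
      show (6 : Fin 7) = (5 : Fin 6).succ from rfl,
      show (5 : Fin 6) = (4 : Fin 5).succ from rfl] <;> try ring

lemma R8_trace (a b c d : ℝ) :
    (R8 a b c d).trace = 2*(Real.cos a + Real.cos b + Real.cos c + Real.cos d) := by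
  simp [R8, Matrix.trace, Fin.sum_univ_eight, Matrix.diag,
      Matrix.cons_val_succ,
      Matrix.vecHead, Matrix.vecTail, Function.comp, Fin.ext_iff,
      show (⟨5, by norm_num⟩ : Fin 8) = (4 : Fin 7).succ from rfl,
      show (⟨6, by norm_num⟩ : Fin 8) = (5 : Fin 7).succ from rfl,
      show (⟨7, by norm_num⟩ : Fin 8) = (6 : Fin 7).succ from rfl,
      show (5 : Fin 8) = (4 : Fin 7).succ from rfl,
      show (6 : Fin 8) = (5 : Fin 7).succ from rfl,
      show (7 : Fin 8) = (6 : Fin 7).succ from rfl,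
      show (5 : Fin 7) = (4 : Fin 6).succ from rfl,
      show (6 : Fin 7) = (5 : Fin 6).succ from rfl,
      show (5 : Fin 6) = (4 : Fin 5).succ from rfl]
  ring

lemma R8_one (a b c d : ℝ) (h1 : Real.cos a = 1) (h2 : Real.sin a = 0)
    (h3 : Real.cos b = 1) (h4 : Real.sin b = 0)
    (h5 : Real.cos c = 1) (h6 : Real.sin c = 0)
    (h7 : Real.cos d = 1) (h8 : Real.sin d = 0) : R8 a b c d = 1 := by
  ext i j
  fin_cases i <;> fin_cases j <;>
    simp [R8, h1, h2, h3, h4, h5, h6, h7, h8, Matrix.one_apply,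
      Matrix.cons_val_succ,
      Matrix.vecHead, Matrix.vecTail, Function.comp, Fin.ext_iff,
      show (⟨5, by norm_num⟩ : Fin 8) = (4 : Fin 7).succ from rfl,
      show (⟨6, by norm_num⟩ : Fin 8) = (5 : Fin 7).succ from rfl,
      show (⟨7, by norm_num⟩ : Fin 8) = (6 : Fin 7).succ from rfl,
      show (5 : Fin 8) = (4 : Fin 7).succ from rfl,
      show (6 : Fin 8) = (5 : Fin 7).succ from rfl,
      show (7 : Fin 8) = (6 : Fin 7).succ from rfl,
      show (5 : Fin 7) = (4 : Fin 6).succ from rfl,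
      show (6 : Fin 7) = (5 : Fin 6).succ from rfl,
      show (5 : Fin 6) = (4 : Fin 5).succ from rfl] <;> rfl

/-- If `R(3θ,θ,θ,3θ)` and `R(0,−φ,φ,2φ)` are conjugate in `SO(8)`, then
both are the identity. -/
theorem pairCE_spin7 (θ φ : ℝ)
    (h : ∃ g : Matrix (Fin 8) (Fin 8) ℝ, gᵀ * g = 1 ∧ g.det = 1 ∧
      g * R8 (3 * θ) θ θ (3 * θ) * g⁻¹ = R8 0 (-φ) φ (2 * φ)) :
    R8 (3 * θ) θ θ (3 * θ) = 1 ∧ R8 0 (-φ) φ (2 * φ) = 1 := by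
  obtain ⟨g, hg, hdet, hconj⟩ := h
  have hginv : g⁻¹ = gᵀ := Matrix.inv_eq_left_inv hg
  set A := R8 (3 * θ) θ θ (3 * θ) with hA
  set B := R8 0 (-φ) φ (2 * φ) with hBdef
  have hB : B = g * A * gᵀ := by rw [← hconj, hginv]
  have hcan : ∀ M : Matrix (Fin 8) (Fin 8) ℝ, gᵀ * (g * M) = M := by
    intro M; rw [← Matrix.mul_assoc, hg, Matrix.one_mul]
  have htr : ∀ M : Matrix (Fin 8) (Fin 8) ℝ, (g * M * gᵀ).trace = M.trace := by
    intro M; rw [Matrix.trace_mul_cycle, hg, Matrix.one_mul]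
  have hB2 : B * B = g * (A * A) * gᵀ := by
    simp only [hB, Matrix.mul_assoc, hcan]
  have hB3 : B * B * B = g * (A * A * A) * gᵀ := by
    simp only [hB, hB2, Matrix.mul_assoc, hcan]
  have hB4 : B * B * B * B = g * (A * A * A * A) * gᵀ := by
    simp only [hB, hB3, Matrix.mul_assoc, hcan]
  have t1 : A.trace = B.trace := by rw [hB, htr]
  have t2 : (A * A).trace = (B * B).trace := by rw [hB2, htr]
  have t3 : (A * A * A).trace = (B * B * B).trace := by rw [hB3, htr]
  have t4 : (A * A * A * A).trace = (B * B * B * B).trace := by rw [hB4, htr]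
  have hA2 : A * A = R8 (3*θ+3*θ) (θ+θ) (θ+θ) (3*θ+3*θ) := R8_mul _ _ _ _ _ _ _ _
  have hA3 : A * A * A = R8 (3*θ+3*θ+3*θ) (θ+θ+θ) (θ+θ+θ) (3*θ+3*θ+3*θ) := by
    rw [hA2]; exact R8_mul _ _ _ _ _ _ _ _
  have hA4 : A * A * A * A = R8 (3*θ+3*θ+3*θ+3*θ) (θ+θ+θ+θ) (θ+θ+θ+θ) (3*θ+3*θ+3*θ+3*θ) := by
    rw [hA3]; exact R8_mul _ _ _ _ _ _ _ _
  have hBm2 : B * B = R8 (0+0) (-φ+-φ) (φ+φ) (2*φ+2*φ) := R8_mul _ _ _ _ _ _ _ _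
  have hBm3 : B * B * B = R8 (0+0+0) (-φ+-φ+-φ) (φ+φ+φ) (2*φ+2*φ+2*φ) := by
    rw [hBm2]; exact R8_mul _ _ _ _ _ _ _ _
  have hBm4 : B * B * B * B = R8 (0+0+0+0) (-φ+-φ+-φ+-φ) (φ+φ+φ+φ) (2*φ+2*φ+2*φ+2*φ) := by
    rw [hBm3]; exact R8_mul _ _ _ _ _ _ _ _
  rw [hA, hBdef, R8_trace, R8_trace] at t1
  rw [hA2, hBm2, R8_trace, R8_trace] at t2
  rw [hA3, hBm3, R8_trace, R8_trace] at t3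
  rw [hA4, hBm4, R8_trace, R8_trace] at t4
  -- normalize all angle sums
  rw [show (3*θ+3*θ) = 2*(3*θ) by ring, show (θ+θ) = 2*θ by ring,
      show ((0:ℝ)+0) = 0 by ring, show (-φ+-φ) = 2*(-φ) by ring,
      show (φ+φ) = 2*φ by ring, show (2*φ+2*φ) = 2*(2*φ) by ring] at t2
  rw [show (3*θ+3*θ+3*θ) = 3*(3*θ) by ring, show (θ+θ+θ) = 3*θ by ring,
      show ((0:ℝ)+0+0) = 0 by ring, show (-φ+-φ+-φ) = 3*(-φ) by ring,
      show (φ+φ+φ) = 3*φ by ring, show (2*φ+2*φ+2*φ) = 2*(3*φ) by ring] at t3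
  rw [show (3*θ+3*θ+3*θ+3*θ) = 2*(2*(3*θ)) by ring, show (θ+θ+θ+θ) = 2*(2*θ) by ring,
      show ((0:ℝ)+0+0+0) = 0 by ring, show (-φ+-φ+-φ+-φ) = 2*(2*(-φ)) by ring,
      show (φ+φ+φ+φ) = 2*(2*φ) by ring, show (2*φ+2*φ+2*φ+2*φ) = 2*(2*(2*φ)) by ring] at t4
  simp only [Real.cos_two_mul, Real.cos_three_mul, Real.cos_neg, Real.cos_zero] at t1 t2 t3 t4
  set x := Real.cos θ with hx
  set y := Real.cos φ with hyd
  -- clean polynomial forms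
  have F1 : (4*x^3-3*x) + x = y^2 + y := by linear_combination (1/4) * t1
  have F2 : (4*x^3-3*x)^2 + x^2 = 2*y^4 - y^2 + 1 := by linear_combination (1/8) * t2
  have F3 : 4*(4*x^3-3*x)^3 - 2*(4*x^3-3*x) = (4*y^3-3*y) + (4*y^3-3*y)^2 := by
    linear_combination (1/4) * t3
  have F4 : (2*(2*(4*x^3-3*x)^2-1)^2-1) + (2*(2*x^2-1)^2-1)
      = (8*y^4-8*y^2+1) + (8*y^4-8*y^2+1)^2 := by linear_combination (1/4) * t4
  have G1 : 2*((4*x^3-3*x)*x) = -y^4+2*y^3+2*y^2-1 := by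
    linear_combination (4*x^3 - 2*x + y^2 + y) * F1 - F2
  have G2 : y*(y-1)*((y-1)*(y+1))^2 = 0 := by
    linear_combination ((32/3)*x^6 + (-56/3)*x^4 + (8/3)*x^3*y^2 + (8/3)*x^3*y + (26/3)*x^2
      + (-4/3)*x*y^2 + (-4/3)*x*y + (2/3)*y^4 + (4/3)*y^3 + (2/3)*y^2 + (-1/2)) * F1
      + (-y^2 - y) * G1 + (-1/6) * F3
  have case_y1 : y = 1 → x = 1 := by
    intro hy1
    have hsq : (4*x^3-4*x)^2 = 0 := by
      linear_combination (4*x^3-2*x+y^2+y)*F1 - 2*G1 + (3*y^3+y^2-2*y-2)*hy1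
    have hcub : 4*x^3-4*x = 0 := (pow_eq_zero_iff (by norm_num : 2 ≠ 0)).mp hsq
    linear_combination (1/2)*F1 - (1/2)*hcub + ((y+2)/2)*hy1
  have hx1 : x = 1 := by
    rcases mul_eq_zero.mp G2 with hh | hh
    · rcases mul_eq_zero.mp hh with h0 | h1
      · exfalso
        have hhalf : x^2 = 1/2 := by
          linear_combination x*F1 + (-1/2)*G1 + (x*y + x + (1/2)*y^3 - y^2 - y)*h0
        have hcontra : (1:ℝ) = 0 := by
          linear_combination (-1/4)*F4
            + (512*x^10 - 1280*x^8 + 1088*x^6 - 352*x^4 + 36*x^2 - 2)*hhalf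
            + (-16*y^7 + 32*y^5 - 22*y^3 + 6*y)*h0
        exact one_ne_zero hcontra
      · exact case_y1 (by linarith)
    · have h2 : (y-1)*(y+1) = 0 := (pow_eq_zero_iff (by norm_num : 2 ≠ 0)).mp hh
      rcases mul_eq_zero.mp h2 with hm | hp
      · exact case_y1 (by linarith)
      · exfalso
        have hym : y = -1 := by linarith
        have hcontra : (1:ℝ) = 0 := by
          linear_combination ((-2)*x^3 + x^2*y^2 + (-1)*x^2*y + (-2)*x^2 + 2*x*y^3 + (-1)*x*y^2
              + (-2)*x*y + (1/2)*x + (-3/4)*y^2 + (-1/4)*y + (1/2))*F1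
            + (x^2 + (-1/2)*x*y^2 + (1/2)*x*y + x + (-1)*y^3 + (1/2)*y^2 + y)*G1
            + ((1/2)*x*y^5 + (-1/2)*x*y + y^6 + (-7/2)*y^5 + (3/2)*y^4 + (3/4)*y^3
              + (5/4)*y^2 + (-3/2)*y + 1)*hym
        exact one_ne_zero hcontra
  have hcθ : Real.cos θ = 1 := by rw [← hx]; exact hx1
  have hpy : Real.sin θ ^ 2 + x^2 = 1 := by rw [hx]; exact Real.sin_sq_add_cos_sq θ
  have hs2 : Real.sin θ ^ 2 = 0 := by linear_combination hpy - (x+1)*hx1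
  have hs : Real.sin θ = 0 := (pow_eq_zero_iff (by norm_num : 2 ≠ 0)).mp hs2
  have hc3 : Real.cos (3*θ) = 1 := by
    rw [Real.cos_three_mul, ← hx]; linear_combination (4*x^2+4*x+1)*hx1
  have hs3 : Real.sin (3*θ) = 0 := by rw [Real.sin_three_mul, hs]; ring
  have hAone : A = 1 := by
    rw [hA]; exact R8_one _ _ _ _ hc3 hs3 hcθ hs hcθ hs hc3 hs3
  have hggT : g * gᵀ = 1 := mul_eq_one_comm.mp hg
  exact ⟨hAone, by rw [hB, hAone, Matrix.mul_one, hggT]⟩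
end
end

section
/- For all A, B ∈ SU(2), if the block-diagonal matrices diag(A, A) and diag(B, I₂) of SU(4) are conjugate in SU(4) (i.e., there exists g ∈ SU(4) with g · diag(B, I₂) · g⁻¹ = diag(A, A)), then A = I₂ and B = I₂. Consequently the biquotient action of SU(2)² on SU(4) given by (A,B) ∗ g = diag(A,A) · g · diag(B, I₂)⁻¹ is free. -/
open Matrix

/-- The 4×4 block-diagonal matrix `diag(A, B)` built from two 2×2 blocks. -/
def blockDiag (A B : Matrix (Fin 2) (Fin 2) ℂ) : Matrix (Fin 4) (Fin 4) ℂ :=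
  Matrix.reindex finSumFinEquiv finSumFinEquiv (Matrix.fromBlocks A 0 0 B)

lemma trace_blockDiag' (X Y : Matrix (Fin 2) (Fin 2) ℂ) :
    (blockDiag X Y).trace = X.trace + Y.trace := by
  have e0 : finSumFinEquiv.symm (0:Fin 4) = (Sum.inl 0 : Fin 2 ⊕ Fin 2) := by decide
  have e1 : finSumFinEquiv.symm (1:Fin 4) = (Sum.inl 1 : Fin 2 ⊕ Fin 2) := by decide
  have e2 : finSumFinEquiv.symm (2:Fin 4) = (Sum.inr 0 : Fin 2 ⊕ Fin 2) := by decide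
  have e3 : finSumFinEquiv.symm (3:Fin 4) = (Sum.inr 1 : Fin 2 ⊕ Fin 2) := by decide
  simp [_root_.blockDiag, Matrix.trace, Matrix.diag, Fin.sum_univ_four, Fin.sum_univ_two,
    e0, e1, e2, e3]
  ring

lemma blockDiag_mul' (X Y Z W : Matrix (Fin 2) (Fin 2) ℂ) :
    blockDiag X Y * blockDiag Z W = blockDiag (X * Z) (Y * W) := by
  simp only [_root_.blockDiag, Matrix.reindex_apply, Matrix.submatrix_mul_equiv,
    Matrix.fromBlocks_multiply]
  simp

lemma trace_sq' (M : Matrix (Fin 2) (Fin 2) ℂ) :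
    (M * M).trace = M.trace ^ 2 - 2 * M.det := by
  simp [Matrix.trace_fin_two, Matrix.mul_apply, Matrix.det_fin_two, Fin.sum_univ_two]
  ring

lemma su2_eq_one' (M : Matrix (Fin 2) (Fin 2) ℂ) (hM : Mᴴ * M = 1) (ht : M.trace = 2) :
    M = 1 := by
  have h00 := congrFun (congrFun hM 0) 0
  have h11 := congrFun (congrFun hM 1) 1
  simp [Matrix.mul_apply, Fin.sum_univ_two, Matrix.conjTranspose_apply,
    Matrix.one_apply] at h00 h11
  rw [Matrix.trace_fin_two] at ht
  set a := M 0 0; set b := M 0 1; set c := M 1 0; set d := M 1 1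
  have h00' : Complex.normSq a + Complex.normSq c = 1 := by
    have := congrArg Complex.re h00
    simpa [Complex.normSq, Complex.mul_re] using this
  have h11' : Complex.normSq b + Complex.normSq d = 1 := by
    have := congrArg Complex.re h11
    simpa [Complex.normSq, Complex.mul_re] using this
  have htre : a.re + d.re = 2 := by
    have := congrArg Complex.re ht; simpa using this
  have htim : a.im + d.im = 0 := by
    have := congrArg Complex.im ht; simpa using this
  have hna : Complex.normSq a ≤ 1 := by nlinarith [Complex.normSq_nonneg c]
  have hnd : Complex.normSq d ≤ 1 := by nlinarith [Complex.normSq_nonneg b]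
  unfold Complex.normSq at hna hnd
  simp at hna hnd
  have hare : a.re = 1 := by
    nlinarith [sq_nonneg (a.re - 1), sq_nonneg (d.re - 1), sq_nonneg a.im, sq_nonneg d.im]
  have hdre : d.re = 1 := by linarith
  have haim : a.im = 0 := by nlinarith [sq_nonneg a.im]
  have hdim : d.im = 0 := by nlinarith [sq_nonneg d.im]
  have ha1 : a = 1 := Complex.ext hare haim
  have hd1 : d = 1 := Complex.ext hdre hdim
  have hc : c = 0 := by
    have : Complex.normSq c = 0 := by rw [ha1] at h00'; simpa using h00'
    exact Complex.normSq_eq_zero.mp this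
  have hb : b = 0 := by
    have : Complex.normSq b = 0 := by rw [hd1] at h11'; simpa using h11'
    exact Complex.normSq_eq_zero.mp this
  rw [Matrix.eta_fin_two M]
  rw [show M 0 0 = 1 from ha1, show M 1 1 = 1 from hd1, show M 0 1 = 0 from hb,
    show M 1 0 = 0 from hc]
  exact Matrix.one_fin_two.symm

/-- For `A, B ∈ SU(2)`, if `diag(A,A)` and `diag(B,I₂)` are conjugate in
`SU(4)`, then `A = I₂` and `B = I₂`.  Consequently the biquotient action of `SU(2)²` on
`SU(4)` given by `(A,B) ∗ g = diag(A,A) · g · diag(B,I₂)⁻¹` is free. -/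
theorem su4_biquotient_free (A B : Matrix (Fin 2) (Fin 2) ℂ)
    (hA : Aᴴ * A = 1) (hAdet : A.det = 1)
    (hB : Bᴴ * B = 1) (hBdet : B.det = 1)
    (h : ∃ g : Matrix (Fin 4) (Fin 4) ℂ, gᴴ * g = 1 ∧ g.det = 1 ∧
      g * blockDiag B 1 * g⁻¹ = blockDiag A A) :
    A = 1 ∧ B = 1 := by
  obtain ⟨g, hg, hgdet, hconj⟩ := h
  have hdu : IsUnit g.det := by simp [hgdet]
  have hinv : g⁻¹ * g = 1 := Matrix.nonsing_inv_mul g hdu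
  have htr : (blockDiag A A).trace = (blockDiag B 1).trace := by
    rw [← hconj, Matrix.trace_mul_comm, ← mul_assoc, hinv, one_mul]
  have hsq : blockDiag A A * blockDiag A A = g * (blockDiag B 1 * blockDiag B 1) * g⁻¹ := by
    rw [← hconj]
    calc g * blockDiag B 1 * g⁻¹ * (g * blockDiag B 1 * g⁻¹)
        = g * blockDiag B 1 * (g⁻¹ * g) * (blockDiag B 1 * g⁻¹) := by
          simp only [mul_assoc]
      _ = g * (blockDiag B 1 * blockDiag B 1) * g⁻¹ := by
          rw [hinv, mul_one]; simp only [mul_assoc]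
  have htr2 : (blockDiag A A * blockDiag A A).trace
      = (blockDiag B 1 * blockDiag B 1).trace := by
    rw [hsq, Matrix.trace_mul_comm, ← mul_assoc, hinv, one_mul]
  rw [trace_blockDiag', trace_blockDiag'] at htr
  rw [blockDiag_mul', blockDiag_mul', trace_blockDiag', trace_blockDiag',
    trace_sq', trace_sq', trace_sq', hAdet, hBdet] at htr2
  have h1 : (1 : Matrix (Fin 2) (Fin 2) ℂ).trace = 2 := by
    simp [Matrix.trace_fin_two]
  have hdet1 : (1 : Matrix (Fin 2) (Fin 2) ℂ).det = 1 := by simp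
  rw [h1] at htr
  rw [hdet1, h1] at htr2
  have htA : A.trace = 2 := by
    have hBtr : B.trace = 2 * A.trace - 2 := by linear_combination -htr
    rw [hBtr] at htr2
    have hz : (A.trace - 2) ^ 2 = 0 := by linear_combination (-1/2 : ℂ) * htr2
    have := pow_eq_zero_iff (n := 2) (by norm_num) |>.mp hz
    linear_combination this
  have htB : B.trace = 2 := by linear_combination -htr + 2 * htA
  exact ⟨su2_eq_one' A hA htA, su2_eq_one' B hB htB⟩
end

section
/- For all complex numbers z, w with |z| = |w| = 1, if the diagonal matrices diag(z, z̄, z, z̄) and diag(w², 1, w̄², 1) are conjugate in SU(4) (i.e., there exists g ∈ SU(4) with g · diag(w²,1,w̄²,1) · g⁻¹ = diag(z,z̄,z,z̄)), then z = 1 and w² = 1, so both matrices equal the identity I₄. Consequently the biquotient action of SU(2)² on SU(4) determined by the pair (2φ₁, φ₀ + φ₂) is effectively free. -/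
/-!
Conjugate matrices have the same spectrum, and the spectrum of a diagonal matrix is the set of
its diagonal entries. Since `1` is an entry of `diag(w², 1, w̄², 1)`, one of `z, z̄` equals `1`,
so `z = 1`; then the spectrum is `{1}`, which forces `w² = 1` and hence also `w̄² = 1`.
-/

open Matrix

theorem Matrix.range_eq_range_of_conj_diagonal {n K : Type*} [Fintype n] [DecidableEq n]
    [Field K] {g : Matrix n n K} (hg : IsUnit g.det) {d e : n → K}
    (h : g * diagonal d * g⁻¹ = diagonal e) : Set.range d = Set.range e := by
  obtain ⟨u, rfl⟩ := (isUnit_iff_isUnit_det g).mpr hg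
  rw [← spectrum_diagonal, ← spectrum_diagonal, ← h, ← coe_units_inv, spectrum.units_conjugate]

theorem su4_pair_effectively_free_general (z w : ℂ)
    (h : ∃ g : Matrix (Fin 4) (Fin 4) ℂ, gᴴ * g = 1 ∧ g.det = 1 ∧
      g * Matrix.diagonal ![w ^ 2, 1, (starRingEnd ℂ w) ^ 2, 1] * g⁻¹ =
        Matrix.diagonal ![z, starRingEnd ℂ z, z, starRingEnd ℂ z]) :
    z = 1 ∧ w ^ 2 = 1 ∧
      Matrix.diagonal ![z, starRingEnd ℂ z, z, starRingEnd ℂ z] = 1 ∧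
      Matrix.diagonal ![w ^ 2, 1, (starRingEnd ℂ w) ^ 2, 1] = 1 := by
  obtain ⟨g, -, hdet, hconj⟩ := h
  have hrange := range_eq_range_of_conj_diagonal (by simp [hdet]) hconj
  have hz : z = 1 := by
    obtain ⟨i, hi⟩ : (1 : ℂ) ∈ Set.range ![z, starRingEnd ℂ z, z, starRingEnd ℂ z] :=
      hrange ▸ ⟨1, rfl⟩
    fin_cases i <;> simpa [map_eq_one_iff _ (RingHom.injective _)] using hi
  have hw : w ^ 2 = 1 := by
    obtain ⟨i, hi⟩ : w ^ 2 ∈ Set.range ![z, starRingEnd ℂ z, z, starRingEnd ℂ z] :=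
      hrange ▸ ⟨0, rfl⟩
    fin_cases i <;> simpa [hz] using hi.symm
  have hw' : starRingEnd ℂ w ^ 2 = 1 := by rw [← map_pow, hw, map_one]
  have hones : ![(1 : ℂ), 1, 1, 1] = fun _ => 1 := by ext i; fin_cases i <;> rfl
  refine ⟨hz, hw, ?_, ?_⟩
  · simp only [hz, map_one, hones, diagonal_one]
  · simp only [hw, hw', hones, diagonal_one]

/-- For unit complex numbers `z, w`, if `diag(z, z̄, z, z̄)` and
`diag(w², 1, w̄², 1)` are conjugate in `SU(4)`, then `z = 1` and `w² = 1`, so both matrices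
are the identity.  Consequently the biquotient action of `SU(2)²` on `SU(4)` determined by
the pair `(2φ₁, φ₀ + φ₂)` is effectively free. -/
theorem su4_pair_effectively_free (z w : ℂ) (hz : ‖z‖ = 1) (hw : ‖w‖ = 1)
    (h : ∃ g : Matrix (Fin 4) (Fin 4) ℂ, gᴴ * g = 1 ∧ g.det = 1 ∧
      g * Matrix.diagonal ![w ^ 2, 1, (starRingEnd ℂ w) ^ 2, 1] * g⁻¹ =
        Matrix.diagonal ![z, starRingEnd ℂ z, z, starRingEnd ℂ z]) :
    z = 1 ∧ w ^ 2 = 1 ∧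
      Matrix.diagonal ![z, starRingEnd ℂ z, z, starRingEnd ℂ z] = 1 ∧
      Matrix.diagonal ![w ^ 2, 1, (starRingEnd ℂ w) ^ 2, 1] = 1 :=
  su4_pair_effectively_free_general z w h
end

section
/- Let ζ = exp(2πi/5). Then there exists g ∈ SU(4) such that g · diag(ζ, ζ⁴, ζ³, ζ²) · g⁻¹ = diag(ζ⁴, ζ, ζ³, ζ²), while diag(ζ, ζ⁴, ζ³, ζ²) ≠ diag(ζ⁴, ζ, ζ³, ζ²) and diag(ζ, ζ⁴, ζ³, ζ²) is not a scalar multiple of the identity. Consequently the biquotient action of SU(2)² on SU(4) determined by the pair (φ₁₀ + φ₀₁, φ₁₁), whose maximal torus images are diag(z, z̄, w, w̄) and diag(zw, z̄w̄, zw̄, z̄w), is not effectively free. -/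
open Matrix

section QuarterTurn

variable (R : Type*) [CommRing R]

/-- A plain transposition matrix would swap the first two diagonal entries but has determinant
`-1`; the sign on one entry puts it in `SU(4)`. -/
def quarterTurn : Matrix (Fin 4) (Fin 4) R :=
  !![0, -1, 0, 0; 1, 0, 0, 0; 0, 0, 1, 0; 0, 0, 0, 1]

theorem quarterTurn_mem_specialUnitaryGroup [StarRing R] :
    quarterTurn R ∈ specialUnitaryGroup (Fin 4) R := by
  refine mem_specialUnitaryGroup_iff.mpr ⟨mem_unitaryGroup_iff'.mpr ?_, ?_⟩
  · ext i j
    fin_cases i <;> fin_cases j <;>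
      simp [quarterTurn, star_eq_conjTranspose, mul_apply, Fin.sum_univ_four]
  · simp [quarterTurn, det_succ_row_zero, Fin.sum_univ_succ]
    rfl

variable {R}

theorem quarterTurn_mul_diagonal (a b c d : R) :
    quarterTurn R * diagonal ![a, b, c, d] = diagonal ![b, a, c, d] * quarterTurn R := by
  ext i j
  fin_cases i <;> fin_cases j <;> simp [quarterTurn, mul_apply, Fin.sum_univ_four]

end QuarterTurn

theorem Matrix.diagonal_ne_smul_one {n R : Type*} [DecidableEq n] [Semiring R] {v : n → R}
    {i j : n} (h : v i ≠ v j) (c : R) : diagonal v ≠ c • (1 : Matrix n n R) := by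
  rw [smul_one_eq_diagonal]
  intro hv
  exact h ((congrFun (diagonal_injective hv) i).trans (congrFun (diagonal_injective hv) j).symm)

/-- With `ζ = exp(2πi/5)`, the matrices `diag(ζ, ζ⁴, ζ³, ζ²)` and
`diag(ζ⁴, ζ, ζ³, ζ²)` are conjugate in `SU(4)`, distinct, and not scalar.  Consequently the
biquotient action of `SU(2)²` on `SU(4)` determined by the pair `(φ₁₀ + φ₀₁, φ₁₁)` is not
effectively free. -/
theorem su4_pair_not_effectively_free :
    ∀ ζ : ℂ, ζ = Complex.exp (2 * Real.pi * Complex.I / 5) →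
    (∃ g : Matrix (Fin 4) (Fin 4) ℂ, gᴴ * g = 1 ∧ g.det = 1 ∧
      g * Matrix.diagonal ![ζ, ζ ^ 4, ζ ^ 3, ζ ^ 2] * g⁻¹ =
        Matrix.diagonal ![ζ ^ 4, ζ, ζ ^ 3, ζ ^ 2]) ∧
    Matrix.diagonal ![ζ, ζ ^ 4, ζ ^ 3, ζ ^ 2] ≠ Matrix.diagonal ![ζ ^ 4, ζ, ζ ^ 3, ζ ^ 2] ∧
    ∀ c : ℂ, Matrix.diagonal ![ζ, ζ ^ 4, ζ ^ 3, ζ ^ 2] ≠ c • (1 : Matrix (Fin 4) (Fin 4) ℂ) := by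
  intro ζ hζ
  have hprim : IsPrimitiveRoot ζ 5 := by
    simpa [hζ] using Complex.isPrimitiveRoot_exp 5 (by norm_num)
  have hne : ζ ≠ ζ ^ 4 := fun h => by
    simpa using hprim.pow_inj (i := 1) (j := 4) (by norm_num) (by norm_num) (by simpa using h)
  obtain ⟨hunitary, hdet⟩ := mem_specialUnitaryGroup_iff.mp
    (quarterTurn_mem_specialUnitaryGroup ℂ)
  refine ⟨⟨quarterTurn ℂ, mem_unitaryGroup_iff'.mp hunitary, hdet, ?_⟩,
    fun h => hne (congrFun (diagonal_injective h) 0), diagonal_ne_smul_one (i := 0) (j := 1) hne⟩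
  rw [quarterTurn_mul_diagonal, mul_nonsing_inv_cancel_right _ _ (hdet ▸ isUnit_one)]
end
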